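/- arXiv:2409.20211 — 3 statements merged into one kernel-verified Lean document; each statement's English description precedes it below -/
import Mathlib

section
/- Let f be a Boolean function of algebraic degree r ≥ 2 in n variables, let a = (a_1, ..., a_n) ∈ F_2^n be nonzero and a_0 ∈ F_2. Then the following are equivalent: (i) the affine hyperplane H = {x ∈ F_2^n : a_0 + Σ_{i=1}^n a_i x_i = 0} is a degree-drop hyperplane for f; (ii) f(x) = (a_0 + Σ_{i=1}^n a_i x_i)·g(x) + c(x) for some Boolean function g of algebraic degree exactly r-1 and some Boolean function c of algebraic degree at most r-1. Consequently, f has a degree-drop hyperplane if and only if f ∼_{r-1} x_1·g(x_2, ..., x_n) for some homogeneous Boolean function g of degree r-1 in the variables x_2, ..., x_n. -/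
open Finset

/-- A Boolean function in `n` variables. -/
abbrev BF (n : ℕ) := (Fin n → ZMod 2) → ZMod 2

/-- The coefficient, in the algebraic normal form of `f`, of the monomial whose
set of variables is `S` (computed by the Möbius/binary Möbius transform). -/
def anf {n : ℕ} (f : BF n) (S : Finset (Fin n)) : ZMod 2 :=
  ∑ T ∈ S.powerset, f (fun i => if i ∈ T then 1 else 0)

/-- The algebraic degree of a Boolean function, with `⊥` (i.e. `-∞`) for the zero function. -/
def degB {n : ℕ} (f : BF n) : WithBot ℕ :=
  (Finset.univ.filter (fun S : Finset (Fin n) => anf f S ≠ 0)).sup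
    (fun S => (S.card : WithBot ℕ))

/-- `f` is homogeneous of degree `r`: all monomials of its ANF have degree `r`. -/
def Homog {n : ℕ} (f : BF n) (r : ℕ) : Prop :=
  ∀ S : Finset (Fin n), anf f S ≠ 0 → S.card = r

/-- `φ` is an affine map. -/
def IsAffineMap {n m : ℕ} (φ : (Fin m → ZMod 2) → (Fin n → ZMod 2)) : Prop :=
  ∃ (L : (Fin m → ZMod 2) →ₗ[ZMod 2] (Fin n → ZMod 2)) (b : Fin n → ZMod 2),
    φ = fun x => L x + b

/-- `A` is a degree-drop affine subspace of co-dimension `k` for `f` : `A` is the range of an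
injective affine parametrization `φ` defined on `F_2^{n-k}`, and the restriction `f|_A`,
viewed as the Boolean function `f ∘ φ` in `n-k` variables, has degree `< deg f`. -/
def DegreeDropSet {n : ℕ} (f : BF n) (k : ℕ) (A : Set (Fin n → ZMod 2)) : Prop :=
  ∃ φ : (Fin (n - k) → ZMod 2) → (Fin n → ZMod 2),
    IsAffineMap φ ∧ Function.Injective φ ∧ Set.range φ = A ∧ degB (f ∘ φ) < degB f

/-- `f` has some degree-drop affine subspace of co-dimension `k`. -/
def HasDDS {n : ℕ} (f : BF n) (k : ℕ) : Prop :=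
  ∃ A : Set (Fin n → ZMod 2), DegreeDropSet f k A

/-- `SimEq r f g` is the relation `f ∼_{r-1} g` : there are an invertible affine
transformation `x ↦ L x + b` of `F_2^n` and a Boolean function `h` of degree at most `r-1`
such that `g = f ∘ φ + h`. -/
def SimEq {n : ℕ} (r : ℕ) (f g : BF n) : Prop :=
  ∃ (L : (Fin n → ZMod 2) ≃ₗ[ZMod 2] (Fin n → ZMod 2)) (b : Fin n → ZMod 2) (h : BF n),
    degB h ≤ ((r - 1 : ℕ) : WithBot ℕ) ∧ g = fun x => f (L x + b) + h x

/-- The complement `f^c` of a (homogeneous) Boolean function: each monomial `m` of the ANF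
is replaced by the monomial on the complementary set of variables. -/
def bcompl {n : ℕ} (f : BF n) : BF n :=
  fun x => ∑ S ∈ Finset.univ.filter (fun S : Finset (Fin n) => anf f S ≠ 0), ∏ i ∈ Sᶜ, x i

/-- Discrete derivative of `f` in direction `a`. -/
def deriv1 {n : ℕ} (a : Fin n → ZMod 2) (f : BF n) : BF n :=
  fun x => f (x + a) + f x

/-- `a` is a fast point of `f` : `a ≠ 0` and `deg (D_a f) < deg f - 1`. -/
def FastPoint {n : ℕ} (f : BF n) (a : Fin n → ZMod 2) : Prop :=
  a ≠ 0 ∧ degB (deriv1 a f) + 1 < degB f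

/-- Membership in `K_{k,r,n}` : `f` is a nonzero homogeneous Boolean function of degree `r`
in `n` variables with no degree-drop affine subspace of co-dimension `k`. -/
def memK {n : ℕ} (k r : ℕ) (f : BF n) : Prop :=
  Homog f r ∧ degB f = (r : WithBot ℕ) ∧ ¬ HasDDS f k

/-- The restriction degree stability of `f` : the largest `k` such that `f` has no
degree-drop affine subspace of co-dimension `k`. -/
noncomputable def degStab {n : ℕ} (f : BF n) : ℕ :=
  sSup {k : ℕ | ¬ HasDDS f k}

/-- `deg_stab(r,n)` : the maximum of `degStab f` over all Boolean functions `f` of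
degree `r` in `n` variables. -/
noncomputable def degStabRN (r n : ℕ) : ℕ :=
  sSup {d : ℕ | ∃ f : BF n, degB f = (r : WithBot ℕ) ∧ d = degStab f}

/-- `g` depends only on the variables in `S`. -/
def DependsOnlyOn {n : ℕ} (g : BF n) (S : Finset (Fin n)) : Prop :=
  ∀ x y : Fin n → ZMod 2, (∀ i ∈ S, x i = y i) → g x = g y

/-- `rank_{r-1}(f)` : the minimum `m` such that some Boolean function `g` depending on only
`m` of the variables satisfies `f ∼_{r-1} g`. -/
noncomputable def rankB {n : ℕ} (r : ℕ) (f : BF n) : ℕ :=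
  sInf {m : ℕ | ∃ g : BF n, SimEq r f g ∧
    ∃ S : Finset (Fin n), S.card = m ∧ DependsOnlyOn g S}

/-- Iterated discrete derivative `D_{a_1}(D_{a_2}(⋯ D_{a_k} f))` along a list of directions. -/
def derivList {n : ℕ} : List (Fin n → ZMod 2) → BF n → BF n
  | [], f => f
  | a :: l, f => deriv1 a (derivList l f)

/-!
Write `ℓ x = a0 + a ⬝ᵥ x` and choose `δ` with `a ⬝ᵥ δ = 1`. As `ℓ` only takes the values `0`
and `1`, `f x = ℓ x * g x + c x` with `g x = f (x + δ) + f x` and `c x = f (x + ℓ x • δ)`. Here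
`g` is a discrete derivative, of degree `≤ r - 1`, and `c` is `f` composed with the affine
projection onto `H = {ℓ = 0}` along `δ`, so it has degree `≤ r - 1` when `H` is a degree-drop
hyperplane; then `deg g = r - 1`, as otherwise `deg f < r`. Conversely, `f = ℓ * g + c` restricts
to `c` on `H`.

For the second equivalence, the range of an injective affine map `F₂^(n-1) → F₂^n` is a
hyperplane, and an affine change of variables turns its equation into `x₀`. In `x₀ * g + c`, all
monomials of `g` except those of degree `r - 1` without `x₀` can then be moved into `c`.

Degrees are handled through the span of the monomials of degree `≤ d`, which is closed under
products (degrees add), affine substitutions and discrete derivatives (the degree drops by one).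
-/

namespace BF

variable {n m : ℕ}

/-! ### Algebraic normal form -/

def monomial (S : Finset (Fin n)) : BF n := fun x => ∏ i ∈ S, x i

def indicator (T : Finset (Fin n)) : Fin n → ZMod 2 := fun i => if i ∈ T then 1 else 0

lemma anf_eq_sum_powerset (f : BF n) (S : Finset (Fin n)) :
    anf f S = ∑ T ∈ S.powerset, f (indicator T) := rfl

lemma monomial_indicator (S T : Finset (Fin n)) :
    monomial S (indicator T) = if S ⊆ T then 1 else 0 := by
  split_ifs with h
  · exact prod_eq_one fun i hi => by simp [indicator, h hi]
  · obtain ⟨i, hiS, hiT⟩ := not_subset.1 h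
    exact prod_eq_zero hiS (by simp [indicator, hiT])

lemma indicator_support (x : Fin n → ZMod 2) : indicator {i | x i = 1} = x := by
  funext i
  rcases (by decide : ∀ z : ZMod 2, z = 0 ∨ z = 1) (x i) with h | h <;> simp [indicator, h]

lemma sum_powerset_sum_powerset (U : Finset (Fin n)) (g : Finset (Fin n) → ZMod 2) :
    ∑ T ∈ U.powerset, ∑ V ∈ T.powerset, g V = g U := by
  induction U using Finset.induction_on generalizing g with
  | empty => simp
  | @insert a U ha ih =>
    have hinsert : ∀ T ∈ U.powerset, ∑ V ∈ (insert a T).powerset, g V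
        = ∑ V ∈ T.powerset, (g V + g (insert a V)) := fun T hT => by
      rw [sum_powerset_insert fun h => ha (mem_powerset.1 hT h), sum_add_distrib]
    rw [sum_powerset_insert ha, sum_congr rfl hinsert, ih, ih, ← add_assoc,
      ZModModule.add_self, zero_add]

def ofANF (c : Finset (Fin n) → ZMod 2) : BF n := ∑ S, c S • monomial S

lemma ofANF_indicator (c : Finset (Fin n) → ZMod 2) (T : Finset (Fin n)) :
    ofANF c (indicator T) = ∑ V ∈ T.powerset, c V := by
  simp [ofANF, monomial_indicator, Finset.sum_apply, ← sum_filter, filter_subset_univ]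

lemma anf_ofANF (c : Finset (Fin n) → ZMod 2) : anf (ofANF c) = c := by
  funext S
  simp only [anf_eq_sum_powerset, ofANF_indicator, sum_powerset_sum_powerset]

lemma ofANF_anf (f : BF n) : ofANF (anf f) = f := by
  funext x
  rw [← indicator_support x, ofANF_indicator]
  simp only [anf_eq_sum_powerset, sum_powerset_sum_powerset]

lemma anf_add (f g : BF n) : anf (f + g) = anf f + anf g := by
  funext S; simp [anf, sum_add_distrib]

lemma anf_smul (c : ZMod 2) (f : BF n) : anf (c • f) = c • anf f := by
  funext S; simp [anf, mul_sum]

lemma anf_zero : anf (0 : BF n) = 0 := by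
  funext S; simp [anf]

lemma anf_sum {ι : Type*} (s : Finset ι) (F : ι → BF n) :
    anf (∑ i ∈ s, F i) = ∑ i ∈ s, anf (F i) := by
  funext T
  simp only [anf, Finset.sum_apply]
  exact sum_comm

lemma anf_monomial (S : Finset (Fin n)) : anf (monomial S) = Pi.single S 1 := by
  have h : monomial S = ofANF (Pi.single S 1) := by
    simp [ofANF, Pi.single_apply]
  rw [h, anf_ofANF]

lemma anf_sum_smul_monomial (s : Finset (Finset (Fin n))) (c : Finset (Fin n) → ZMod 2)
    (T : Finset (Fin n)) : anf (∑ S ∈ s, c S • monomial S) T = if T ∈ s then c T else 0 := by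
  simp [anf_sum, anf_smul, anf_monomial, Finset.sum_apply, Pi.single_apply]

lemma monomial_empty : monomial (∅ : Finset (Fin n)) = 1 := by
  funext x; simp [monomial]

lemma monomial_singleton (k : Fin n) : monomial {k} = fun x => x k := by
  funext x; simp [monomial]

lemma monomial_mul_monomial (S T : Finset (Fin n)) : monomial S * monomial T = monomial (S ∪ T) := by
  funext x
  simp only [monomial, Pi.mul_apply]
  by_cases h : ∀ i ∈ S ∪ T, x i = 1
  · rw [prod_eq_one h, prod_eq_one fun i hi => h i (mem_union_left T hi),
      prod_eq_one fun i hi => h i (mem_union_right S hi), one_mul]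
  · push Not at h
    obtain ⟨i, hi, hxi⟩ := h
    have hx0 : x i = 0 := (by decide : ∀ z : ZMod 2, z ≠ 1 → z = 0) _ hxi
    rw [prod_eq_zero hi hx0]
    rcases mem_union.1 hi with hiS | hiT
    · rw [prod_eq_zero hiS hx0, zero_mul]
    · rw [prod_eq_zero hiT hx0, mul_zero]

/-! ### Functions of bounded degree -/

def degreeLE (n d : ℕ) : Submodule (ZMod 2) (BF n) :=
  Submodule.span (ZMod 2) (monomial '' {S | S.card ≤ d})

lemma monomial_mem_degreeLE {S : Finset (Fin n)} {d : ℕ} (h : S.card ≤ d) :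
    monomial S ∈ degreeLE n d :=
  Submodule.subset_span ⟨S, h, rfl⟩

lemma degreeLE_mono {d e : ℕ} (h : d ≤ e) : degreeLE n d ≤ degreeLE n e :=
  Submodule.span_mono (Set.image_mono fun _ hS => le_trans hS h)

lemma anf_eq_zero_of_mem_degreeLE {f : BF n} {d : ℕ} (hf : f ∈ degreeLE n d)
    {S : Finset (Fin n)} (hS : d < S.card) : anf f S = 0 := by
  induction hf using Submodule.span_induction with
  | mem g hg =>
    obtain ⟨T, hT, rfl⟩ := hg
    rw [anf_monomial, Pi.single_apply, if_neg]
    rintro rfl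
    exact absurd hT (not_le.2 hS)
  | zero => simp [anf_zero]
  | add g h _ _ hg hh => simp [anf_add, hg, hh]
  | smul c g _ hg => simp [anf_smul, hg]

lemma degB_le_iff_mem_degreeLE {f : BF n} {d : ℕ} :
    degB f ≤ d ↔ f ∈ degreeLE n d := by
  simp only [degB, Finset.sup_le_iff, mem_filter, mem_univ, true_and, Nat.cast_le]
  constructor
  · intro h
    rw [← ofANF_anf f]
    refine Submodule.sum_mem _ fun S _ => ?_
    by_cases hS : anf f S = 0
    · simp [hS]
    · exact Submodule.smul_mem _ _ (monomial_mem_degreeLE (h S hS))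
  · intro hf S hS
    by_contra hlt
    exact hS (anf_eq_zero_of_mem_degreeLE hf (not_le.1 hlt))

lemma degB_lt_iff_mem_degreeLE {f : BF n} {d : ℕ} :
    degB f < (d + 1 : ℕ) ↔ f ∈ degreeLE n d := by
  rw [← degB_le_iff_mem_degreeLE]
  cases degB f with
  | bot => simp
  | coe e => simp only [Nat.cast_withBot, WithBot.coe_lt_coe, WithBot.coe_le_coe]; omega

lemma degB_eq_iff_mem_degreeLE {f : BF n} {d : ℕ} :
    degB f = (d + 1 : ℕ) ↔ f ∈ degreeLE n (d + 1) ∧ f ∉ degreeLE n d := by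
  rw [← degB_le_iff_mem_degreeLE, ← degB_le_iff_mem_degreeLE]
  cases degB f with
  | bot =>
    simp only [Nat.cast_withBot, bot_le, true_and, not_true, iff_false]
    exact WithBot.bot_ne_coe
  | coe e => simp only [Nat.cast_withBot, WithBot.coe_inj, WithBot.coe_le_coe]; omega

lemma not_mem_degreeLE_of_degB_eq {f : BF n} {d e : ℕ} (hf : degB f = d) (he : e < d) :
    f ∉ degreeLE n e := by
  rw [← degB_le_iff_mem_degreeLE, hf]
  exact_mod_cast not_le.2 he

lemma mem_degreeLE_of_homog {g : BF n} {d : ℕ} (hg : Homog g d) : g ∈ degreeLE n d :=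
  degB_le_iff_mem_degreeLE.1 <| Finset.sup_le fun S hS => by
    rw [hg S (mem_filter.1 hS).2]

open scoped Pointwise in
lemma mul_mem_degreeLE {f g : BF n} {d e : ℕ} (hf : f ∈ degreeLE n d) (hg : g ∈ degreeLE n e) :
    f * g ∈ degreeLE n (d + e) := by
  have hprod := Submodule.mul_mem_mul hf hg
  rw [degreeLE, degreeLE, Submodule.span_mul_span] at hprod
  refine Submodule.span_mono ?_ hprod
  rintro _ ⟨_, ⟨S, hS, rfl⟩, _, ⟨T, hT, rfl⟩, rfl⟩
  exact ⟨S ∪ T, le_trans (card_union_le S T) (add_le_add hS hT), (monomial_mul_monomial S T).symm⟩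

lemma prod_mem_degreeLE {ι : Type*} {s : Finset ι} {F : ι → BF n}
    (h : ∀ i ∈ s, F i ∈ degreeLE n 1) : ∏ i ∈ s, F i ∈ degreeLE n s.card := by
  classical
  induction s using Finset.induction_on with
  | empty => simpa [monomial_empty] using monomial_mem_degreeLE (n := n) (S := ∅) le_rfl
  | @insert a s ha ih =>
    rw [prod_insert ha, card_insert_of_notMem ha, add_comm]
    exact mul_mem_degreeLE (h a (mem_insert_self a s))
      (ih fun i hi => h i (mem_insert_of_mem hi))

lemma affineForm_mem_degreeLE (a0 : ZMod 2) (a : Fin n → ZMod 2) :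
    (fun x => a0 + a ⬝ᵥ x) ∈ degreeLE n 1 := by
  have h : (fun x => a0 + a ⬝ᵥ x) = a0 • monomial ∅ + ∑ i, a i • monomial {i} := by
    funext x
    simp [monomial, dotProduct, Finset.sum_apply]
  rw [h]
  exact add_mem (Submodule.smul_mem _ _ (monomial_mem_degreeLE (by simp)))
    (Submodule.sum_mem _ fun i _ => Submodule.smul_mem _ _ (monomial_mem_degreeLE (by simp)))

lemma deriv1_monomial (a : Fin n → ZMod 2) (S : Finset (Fin n)) :
    deriv1 a (monomial S) = ∑ U ∈ S.powerset.erase S, (∏ i ∈ S \ U, a i) • monomial U := by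
  funext x
  simp only [deriv1, monomial, Pi.add_apply, prod_add, Finset.sum_apply, Pi.smul_apply, smul_eq_mul]
  rw [← add_sum_erase _ _ (mem_powerset_self S), sdiff_self, bot_eq_empty, prod_empty, mul_one,
    add_comm, ← add_assoc, ZModModule.add_self, zero_add]
  exact sum_congr rfl fun U _ => mul_comm _ _

lemma deriv1_mem_degreeLE (a : Fin n → ZMod 2) {f : BF n} {d : ℕ}
    (hf : f ∈ degreeLE n (d + 1)) : deriv1 a f ∈ degreeLE n d := by
  induction hf using Submodule.span_induction with
  | mem g hg =>
    obtain ⟨S, hS : S.card ≤ d + 1, rfl⟩ := hg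
    rw [deriv1_monomial]
    refine Submodule.sum_mem _ fun U hU => Submodule.smul_mem _ _ (monomial_mem_degreeLE ?_)
    obtain ⟨hUS, hU⟩ := mem_erase.1 hU
    have := card_lt_card (ssubset_of_subset_of_ne (mem_powerset.1 hU) hUS)
    omega
  | zero =>
    convert zero_mem (degreeLE n d)
    funext x; simp [deriv1]
  | add g h _ _ hg hh =>
    convert add_mem hg hh using 1
    funext x; simp only [deriv1, Pi.add_apply]; ring
  | smul c g _ hg =>
    convert Submodule.smul_mem _ c hg using 1
    funext x; simp only [deriv1, Pi.smul_apply, smul_eq_mul]; ring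

lemma exists_homog_add_of_mem_degreeLE {G : BF n} {d : ℕ} (hG : G ∈ degreeLE n d) (k : Fin n) :
    ∃ g₁ g₂ : BF n, G = g₁ + g₂ ∧ Homog g₁ d ∧ (∀ S, anf g₁ S ≠ 0 → k ∉ S) ∧
      (fun x => x k) * g₂ ∈ degreeLE n d := by
  classical
  let P : Finset (Fin n) → Prop := fun S => k ∉ S ∧ S.card = d
  refine ⟨∑ S with P S, anf G S • monomial S, ∑ S with ¬ P S, anf G S • monomial S,
    ((sum_filter_add_sum_filter_not _ _ _).trans (ofANF_anf G)).symm, fun S hS => ?_,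
    fun S hS => ?_, ?_⟩
  · rw [anf_sum_smul_monomial, ite_ne_right_iff] at hS
    exact (mem_filter.1 hS.1).2.2
  · rw [anf_sum_smul_monomial, ite_ne_right_iff] at hS
    exact (mem_filter.1 hS.1).2.1
  · rw [mul_sum]
    refine Submodule.sum_mem _ fun S hS => ?_
    rw [mul_smul_comm, ← monomial_singleton, monomial_mul_monomial, singleton_union]
    by_cases hGS : anf G S = 0
    · simp [hGS]
    refine Submodule.smul_mem _ _ (monomial_mem_degreeLE ?_)
    have hcard : S.card ≤ d := not_lt.1 (mt (anf_eq_zero_of_mem_degreeLE hG) hGS)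
    have hnP : ¬ P S := (mem_filter.1 hS).2
    by_cases hkS : k ∈ S
    · rwa [insert_eq_of_mem hkS]
    · rw [card_insert_of_notMem hkS]
      exact lt_of_le_of_ne hcard fun h => hnP ⟨hkS, h⟩

lemma degB_eq_of_eq_mul_add {F ℓ g c : BF n} {d : ℕ} (hF : F ∉ degreeLE n (d + 1))
    (hℓ : ℓ ∈ degreeLE n 1) (hg : g ∈ degreeLE n (d + 1)) (hc : c ∈ degreeLE n (d + 1))
    (h : F = ℓ * g + c) : degB g = (d + 1 : ℕ) := by
  refine degB_eq_iff_mem_degreeLE.2 ⟨hg, fun hg' => hF ?_⟩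
  rw [h]
  exact add_mem (add_comm 1 d ▸ mul_mem_degreeLE hℓ hg') hc

/-! ### Affine substitutions -/

variable {l : ℕ}

lemma isAffineMap_comp {φ : (Fin m → ZMod 2) → (Fin n → ZMod 2)}
    {ψ : (Fin l → ZMod 2) → (Fin m → ZMod 2)} (hφ : IsAffineMap φ) (hψ : IsAffineMap ψ) :
    IsAffineMap (φ ∘ ψ) := by
  obtain ⟨L, b, rfl⟩ := hφ
  obtain ⟨L', b', rfl⟩ := hψ
  exact ⟨L ∘ₗ L', L b' + b, by funext y; simp [add_assoc]⟩

lemma isAffineMap_shear (a : Fin n → ZMod 2) (a0 : ZMod 2) (δ : Fin n → ZMod 2) :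
    IsAffineMap (fun x => x + (a0 + a ⬝ᵥ x) • δ) :=
  ⟨LinearMap.id + (dotProductEquiv (ZMod 2) (Fin n) a).smulRight δ, a0 • δ, by
    funext x; simp [add_smul, add_assoc, add_comm (a0 • δ)]⟩

lemma isAffineMap_cons_zero :
    IsAffineMap (fun y : Fin m → ZMod 2 => (Fin.cons 0 y : Fin (m + 1) → ZMod 2)) :=
  ⟨LinearMap.vecCons 0 LinearMap.id, 0, by funext y; simp [Matrix.vecCons]⟩

lemma coord_mem_degreeLE_of_isAffineMap {φ : (Fin m → ZMod 2) → (Fin n → ZMod 2)}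
    (hφ : IsAffineMap φ) (i : Fin n) : (fun y => φ y i) ∈ degreeLE m 1 := by
  obtain ⟨L, b, rfl⟩ := hφ
  convert affineForm_mem_degreeLE (b i) (fun j => L (Pi.single j 1) i) using 2 with y
  conv_lhs => rw [← univ_sum_single y]
  have hsingle : ∀ j, Pi.single j (y j) = y j • (Pi.single j 1 : Fin m → ZMod 2) := fun j => by
    rw [← Pi.single_smul', smul_eq_mul, mul_one]
  simp [hsingle, dotProduct, add_comm, mul_comm]

lemma comp_mem_degreeLE {φ : (Fin m → ZMod 2) → (Fin n → ZMod 2)}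
    (hφ : IsAffineMap φ) {f : BF n} {d : ℕ} (hf : f ∈ degreeLE n d) : f ∘ φ ∈ degreeLE m d := by
  induction hf using Submodule.span_induction with
  | mem g hg =>
    obtain ⟨S, hS, rfl⟩ := hg
    have h : monomial S ∘ φ = ∏ i ∈ S, fun y => φ y i := by
      funext y; simp [monomial, Finset.prod_apply]
    rw [h]
    exact degreeLE_mono hS (prod_mem_degreeLE fun i _ => coord_mem_degreeLE_of_isAffineMap hφ i)
  | zero => exact zero_mem _
  | add g h _ _ hg hh => exact add_mem hg hh
  | smul c g _ hg => exact Submodule.smul_mem _ c hg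

lemma exists_comp_eq_of_range_subset {φ : (Fin m → ZMod 2) → (Fin n → ZMod 2)}
    {ψ : (Fin l → ZMod 2) → (Fin n → ZMod 2)} (hφ : IsAffineMap φ) (hφi : Function.Injective φ)
    (hψ : IsAffineMap ψ) (hsub : Set.range ψ ⊆ Set.range φ) :
    ∃ ρ : (Fin l → ZMod 2) → (Fin m → ZMod 2), IsAffineMap ρ ∧ φ ∘ ρ = ψ := by
  obtain ⟨L, b, rfl⟩ := hφ
  obtain ⟨L', b', rfl⟩ := hψ
  have hL : LinearMap.ker L = ⊥ :=
    LinearMap.ker_eq_bot.2 fun u v huv => hφi (by simp only [huv])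
  obtain ⟨g, hg⟩ := L.exists_leftInverse_of_injective hL
  have hgL : ∀ z, g (L z) = z := LinearMap.congr_fun hg
  refine ⟨fun y => g (L' y + b' + b), ⟨g ∘ₗ L', g (b' + b), ?_⟩, ?_⟩
  · funext y; simp [← map_add, add_assoc]
  · funext y
    obtain ⟨z, hz : L z + b = L' y + b'⟩ := hsub ⟨y, rfl⟩
    have hLz : L' y + b' + b = L z := by
      rw [← hz, add_assoc, ZModModule.add_self, add_zero]
    simp only [Function.comp_apply, hLz, hgL, hz]

lemma comp_mem_degreeLE_of_range_subset {φ : (Fin m → ZMod 2) → (Fin n → ZMod 2)}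
    {ψ : (Fin l → ZMod 2) → (Fin n → ZMod 2)} (hφ : IsAffineMap φ) (hφi : Function.Injective φ)
    (hψ : IsAffineMap ψ) (hsub : Set.range ψ ⊆ Set.range φ) {f : BF n} {d : ℕ}
    (hf : f ∘ φ ∈ degreeLE m d) : f ∘ ψ ∈ degreeLE l d := by
  obtain ⟨ρ, hρ, rfl⟩ := exists_comp_eq_of_range_subset hφ hφi hψ hsub
  exact comp_mem_degreeLE hρ hf

lemma mem_degreeLE_of_comp_linearEquiv (M : (Fin n → ZMod 2) ≃ₗ[ZMod 2] (Fin n → ZMod 2))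
    (v : Fin n → ZMod 2) {f : BF n} {d : ℕ} (h : (fun x => f (M x + v)) ∈ degreeLE n d) :
    f ∈ degreeLE n d := by
  convert comp_mem_degreeLE ⟨M.symm.toLinearMap, M.symm v, rfl⟩ h using 1
  funext y
  simp [← map_add, add_assoc, ZModModule.add_self]

/-! ### Hyperplanes -/

lemma exists_eq_one_of_ne_zero {a : Fin n → ZMod 2} (ha : a ≠ 0) : ∃ j, a j = 1 := by
  obtain ⟨j, hj⟩ := Function.ne_iff.1 ha
  exact ⟨j, (by decide : ∀ z : ZMod 2, z ≠ 0 → z = 1) _ hj⟩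

lemma exists_linearEquiv_affineForm_eq_coord {a : Fin n → ZMod 2} (ha : a ≠ 0) (a0 : ZMod 2)
    (k : Fin n) : ∃ (M : (Fin n → ZMod 2) ≃ₗ[ZMod 2] (Fin n → ZMod 2)) (v : Fin n → ZMod 2),
      ∀ x, a0 + a ⬝ᵥ (M x + v) = x k := by
  obtain ⟨j, hj⟩ := exists_eq_one_of_ne_zero ha
  set e : Fin n → ZMod 2 := Pi.single j 1
  have hae : a ⬝ᵥ e = 1 := by simp [e, hj]
  -- `T` overwrites the `j`-th coordinate with `a ⬝ᵥ x`; as `a j = 1` it is an involution.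
  let T : (Fin n → ZMod 2) →ₗ[ZMod 2] (Fin n → ZMod 2) :=
    LinearMap.id + (dotProductEquiv (ZMod 2) (Fin n) a + LinearMap.proj j).smulRight e
  have hT : ∀ x, T x = x + (a ⬝ᵥ x + x j) • e := fun x => rfl
  have haT : ∀ x, a ⬝ᵥ T x = x j := fun x => by
    rw [hT, dotProduct_add, dotProduct_smul, hae, smul_eq_mul, mul_one, ← add_assoc,
      ZModModule.add_self, zero_add]
  have hTj : ∀ x, T x j = a ⬝ᵥ x := fun x => by
    simp [hT, e, add_left_comm (x j), ZModModule.add_self]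
  have hTT : Function.Involutive T := fun x => by
    rw [hT (T x), haT, hTj, hT x, add_comm (x j), add_assoc, ZModModule.add_self, add_zero]
  refine ⟨(LinearEquiv.funCongrLeft (ZMod 2) (ZMod 2) (Equiv.swap k j)).trans
    (LinearEquiv.ofInvolutive T hTT), a0 • e, fun x => ?_⟩
  simp [dotProduct_add, haT, hae, add_left_comm a0, ZModModule.add_self]

lemma exists_range_eq_hyperplane {a : Fin (m + 1) → ZMod 2} (ha : a ≠ 0) (a0 : ZMod 2) :
    ∃ φ : (Fin m → ZMod 2) → (Fin (m + 1) → ZMod 2), IsAffineMap φ ∧ Function.Injective φ ∧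
      Set.range φ = {x | a0 + a ⬝ᵥ x = 0} := by
  obtain ⟨M, v, hMv⟩ := exists_linearEquiv_affineForm_eq_coord ha a0 0
  refine ⟨fun y => M (Fin.cons 0 y) + v,
    isAffineMap_comp (φ := fun z => M z + v) ⟨M.toLinearMap, v, rfl⟩ isAffineMap_cons_zero,
    fun y y' h => Fin.cons_right_injective _ (M.injective (add_right_cancel h)), ?_⟩
  ext x
  constructor
  · rintro ⟨y, rfl⟩
    exact hMv _
  · intro hx
    set z := M.symm (x + v)
    have hz : M z + v = x := by simp [z, add_assoc, ZModModule.add_self]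
    have hz0 : z 0 = 0 := by rw [← hMv z, hz]; exact hx
    refine ⟨Fin.tail z, ?_⟩
    simp only [← hz0, Fin.cons_self_tail, hz]

lemma exists_range_eq_hyperplane_of_injective {φ : (Fin m → ZMod 2) → (Fin (m + 1) → ZMod 2)}
    (hφ : IsAffineMap φ) (hφi : Function.Injective φ) :
    ∃ (a : Fin (m + 1) → ZMod 2) (a0 : ZMod 2), a ≠ 0 ∧
      Set.range φ = {x | a0 + a ⬝ᵥ x = 0} := by
  obtain ⟨L, b, rfl⟩ := hφ
  have hL : Function.Injective L := fun u v huv => hφi (by simp only [huv])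
  set p := LinearMap.range L
  have hq : Module.finrank (ZMod 2) ((Fin (m + 1) → ZMod 2) ⧸ p) = 1 := by
    have := p.finrank_quotient_add_finrank
    rw [LinearMap.finrank_range_of_inj hL] at this
    simp at this
    omega
  obtain ⟨e⟩ : Nonempty (((Fin (m + 1) → ZMod 2) ⧸ p) ≃ₗ[ZMod 2] ZMod 2) :=
    ⟨LinearEquiv.ofFinrankEq _ _ (by rw [hq, Module.finrank_self])⟩
  set ℓ : Module.Dual (ZMod 2) (Fin (m + 1) → ZMod 2) := e.toLinearMap ∘ₗ p.mkQ
  have hker : ∀ x, ℓ x = 0 ↔ x ∈ p := fun x => by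
    simp [ℓ, Submodule.Quotient.mk_eq_zero]
  set a := (dotProductEquiv (ZMod 2) (Fin (m + 1))).symm ℓ
  have ha : ∀ x, a ⬝ᵥ x = ℓ x := fun x => by
    rw [← dotProductEquiv_apply_apply, LinearEquiv.apply_symm_apply]
  refine ⟨a, ℓ b, fun h0 => ?_, ?_⟩
  · obtain ⟨x, hx⟩ : ∃ x, ℓ x = 1 :=
      (e.surjective.comp p.mkQ_surjective) 1
    rw [← ha, h0, zero_dotProduct] at hx
    exact zero_ne_one hx
  · ext x
    rw [Set.mem_ofPred_eq, ha, add_comm (ℓ b), ← map_add, hker]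
    constructor
    · rintro ⟨y, rfl⟩
      rw [add_assoc, ZModModule.add_self, add_zero]
      exact LinearMap.mem_range_self L y
    · rintro ⟨y, hy⟩
      exact ⟨y, by simp only [hy, add_assoc, ZModModule.add_self, add_zero]⟩

/-! ### Degree-drop hyperplanes -/

theorem exists_eq_affineForm_mul_add_of_degreeDropSet {f : BF n} {d : ℕ}
    (hf : degB f = (d + 2 : ℕ)) {a : Fin n → ZMod 2} (ha : a ≠ 0) {a0 : ZMod 2}
    (h : DegreeDropSet f 1 {x | a0 + a ⬝ᵥ x = 0}) :
    ∃ g c : BF n, degB g = (d + 1 : ℕ) ∧ c ∈ degreeLE n (d + 1) ∧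
      f = fun x => (a0 + a ⬝ᵥ x) * g x + c x := by
  obtain ⟨φ, hφ, hφi, hrange, hdrop⟩ := h
  rw [hf] at hdrop
  obtain ⟨j, hj⟩ := exists_eq_one_of_ne_zero ha
  set δ : Fin n → ZMod 2 := Pi.single j 1
  have hδ : a ⬝ᵥ δ = 1 := by simp [δ, hj]
  have hproj : Set.range (fun x => x + (a0 + a ⬝ᵥ x) • δ) ⊆ Set.range φ := by
    rintro _ ⟨x, rfl⟩
    rw [hrange, Set.mem_ofPred_eq, dotProduct_add, dotProduct_smul, hδ, smul_eq_mul, mul_one,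
      ← add_assoc, ZModModule.add_self]
  have hc : f ∘ (fun x => x + (a0 + a ⬝ᵥ x) • δ) ∈ degreeLE n (d + 1) :=
    comp_mem_degreeLE_of_range_subset hφ hφi (isAffineMap_shear a a0 δ) hproj
      (degB_lt_iff_mem_degreeLE.1 hdrop)
  have hg : deriv1 δ f ∈ degreeLE n (d + 1) :=
    deriv1_mem_degreeLE δ (degB_le_iff_mem_degreeLE.1 hf.le)
  have hdecomp : f = fun x => (a0 + a ⬝ᵥ x) * deriv1 δ f x + f (x + (a0 + a ⬝ᵥ x) • δ) := by
    funext x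
    rcases (by decide : ∀ z : ZMod 2, z = 0 ∨ z = 1) (a0 + a ⬝ᵥ x) with h | h
    · simp [h]
    · simp only [h, deriv1, one_smul, one_mul]
      rw [add_right_comm, ZModModule.add_self, zero_add]
  refine ⟨deriv1 δ f, _, degB_eq_of_eq_mul_add ?_ (affineForm_mem_degreeLE a0 a) hg hc hdecomp,
    hc, hdecomp⟩
  exact not_mem_degreeLE_of_degB_eq hf (by omega)

theorem degreeDropSet_of_eq_affineForm_mul_add {f g c : BF (m + 1)} {d : ℕ}
    (hf : degB f = (d + 1 : ℕ)) {a : Fin (m + 1) → ZMod 2} (ha : a ≠ 0) {a0 : ZMod 2}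
    (hc : c ∈ degreeLE (m + 1) d) (h : f = fun x => (a0 + a ⬝ᵥ x) * g x + c x) :
    DegreeDropSet f 1 {x | a0 + a ⬝ᵥ x = 0} := by
  obtain ⟨φ, hφ, hφi, hrange⟩ := exists_range_eq_hyperplane ha a0
  refine ⟨φ, hφ, hφi, hrange, ?_⟩
  have hfφ : f ∘ φ = c ∘ φ := by
    funext y
    have hy : φ y ∈ {x | a0 + a ⬝ᵥ x = 0} := hrange ▸ Set.mem_range_self y
    simp [h, Set.mem_ofPred_eq ▸ hy]
  rw [hf, hfφ, degB_lt_iff_mem_degreeLE]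
  exact comp_mem_degreeLE hφ hc

theorem exists_simEq_coord_mul_of_hasDDS {f : BF (m + 1)} {d : ℕ} (hf : degB f = (d + 2 : ℕ))
    (h : HasDDS f 1) :
    ∃ g : BF (m + 1), Homog g (d + 1) ∧ degB g = (d + 1 : ℕ) ∧
      (∀ S, anf g S ≠ 0 → 0 ∉ S) ∧ SimEq (d + 2) f (fun x => x 0 * g x) := by
  obtain ⟨_, φ, hφ, hφi, rfl, hdrop⟩ := h
  obtain ⟨a, a0, ha, hrange⟩ := exists_range_eq_hyperplane_of_injective (m := m) hφ hφi
  obtain ⟨g₁, c₁, hg₁, hc₁, hdecomp⟩ :=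
    exists_eq_affineForm_mul_add_of_degreeDropSet hf ha ⟨φ, hφ, hφi, hrange, hdrop⟩
  obtain ⟨M, v, hMv⟩ := exists_linearEquiv_affineForm_eq_coord ha a0 0
  have hA : IsAffineMap fun x => M x + v := ⟨M.toLinearMap, v, rfl⟩
  obtain ⟨g, g', hsplit, hhom, hfree, hg'⟩ := exists_homog_add_of_mem_degreeLE
    (comp_mem_degreeLE hA (degB_le_iff_mem_degreeLE.1 hg₁.le)) 0
  set c : BF (m + 1) := (fun x => x 0) * g' + c₁ ∘ fun x => M x + v
  have hc : c ∈ degreeLE (m + 1) (d + 1) := add_mem hg' (comp_mem_degreeLE hA hc₁)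
  have hfA : (fun x => f (M x + v)) = (fun x => x 0) * g + c := by
    funext x
    have hgx : g₁ (M x + v) = g x + g' x := congrFun hsplit x
    rw [hdecomp]
    simp only [hMv, hgx, c, Pi.add_apply, Pi.mul_apply, Function.comp_apply]
    ring
  have hfA' : (fun x => f (M x + v)) ∉ degreeLE (m + 1) (d + 1) := fun hmem =>
    not_mem_degreeLE_of_degB_eq hf (by omega) (mem_degreeLE_of_comp_linearEquiv M v hmem)
  refine ⟨g, hhom, degB_eq_of_eq_mul_add hfA' ?_ (mem_degreeLE_of_homog hhom) hc hfA, hfree,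
    M, v, c, degB_le_iff_mem_degreeLE.2 hc, ?_⟩
  · simpa [monomial_singleton] using monomial_mem_degreeLE (n := m + 1) (S := {0}) le_rfl
  · funext x
    rw [congrFun hfA x, Pi.add_apply, add_assoc, ZModModule.add_self, add_zero]
    rfl

theorem hasDDS_of_simEq_coord_mul {f g : BF (m + 1)} {d : ℕ} (hf : degB f = (d + 1 : ℕ))
    (h : SimEq (d + 1) f (fun x => x 0 * g x)) : HasDDS f 1 := by
  obtain ⟨L, b, c, hc, heq⟩ := h
  set φ : (Fin m → ZMod 2) → (Fin (m + 1) → ZMod 2) := fun y => L (Fin.cons 0 y) + b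
  have hφ : IsAffineMap φ :=
    isAffineMap_comp (φ := fun z => L z + b) ⟨L.toLinearMap, b, rfl⟩ isAffineMap_cons_zero
  refine ⟨_, φ, hφ,
    fun y y' h => Fin.cons_right_injective _ (L.injective (add_right_cancel h)), rfl, ?_⟩
  have hfφ : f ∘ φ = c ∘ Fin.cons 0 := by
    funext y
    have := congrFun heq (Fin.cons 0 y)
    simp only [Fin.cons_zero, zero_mul] at this
    exact CharTwo.add_eq_zero.1 this.symm
  rw [hf, hfφ, degB_lt_iff_mem_degreeLE]
  exact comp_mem_degreeLE isAffineMap_cons_zero (degB_le_iff_mem_degreeLE.1 hc)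

end BF

/-- characterization of degree-drop hyperplanes: `H = {x | a₀ + Σ aᵢxᵢ = 0}` is a
degree-drop hyperplane for `f` (of degree `r ≥ 2`) iff `f = (a₀ + Σ aᵢxᵢ)·g + c` with
`deg g = r-1` and `deg c ≤ r-1`. Consequently `f` has a degree-drop hyperplane iff
`f ∼_{r-1} x₁·g(x₂,…,xₙ)` for some homogeneous `g` of degree `r-1` not involving `x₁`. -/
theorem stmt1 {n r : ℕ} (hn : 0 < n) (hr : 2 ≤ r) (f : BF n)
    (hdegf : degB f = (r : WithBot ℕ))
    (a : Fin n → ZMod 2) (ha : a ≠ 0) (a0 : ZMod 2) :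
    (DegreeDropSet f 1 {x | a0 + ∑ i, a i * x i = 0} ↔
      ∃ g c : BF n, degB g = ((r - 1 : ℕ) : WithBot ℕ) ∧
        degB c ≤ ((r - 1 : ℕ) : WithBot ℕ) ∧
        f = fun x => (a0 + ∑ i, a i * x i) * g x + c x)
    ∧
    (HasDDS f 1 ↔
      ∃ g : BF n, Homog g (r - 1) ∧ degB g = ((r - 1 : ℕ) : WithBot ℕ) ∧
        (∀ S : Finset (Fin n), anf g S ≠ 0 → (⟨0, hn⟩ : Fin n) ∉ S) ∧
        SimEq r f (fun x => x ⟨0, hn⟩ * g x)) := by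
  obtain ⟨d, rfl⟩ : ∃ d, r = d + 2 := ⟨r - 2, by omega⟩
  obtain ⟨m, rfl⟩ : ∃ m, n = m + 1 := ⟨n - 1, by omega⟩
  refine ⟨⟨fun h => ?_, fun ⟨g, c, _, hc, h⟩ => ?_⟩,
    ⟨BF.exists_simEq_coord_mul_of_hasDDS hdegf, fun ⟨g, _, _, _, h⟩ => ?_⟩⟩
  · obtain ⟨g, c, hg, hc, h⟩ := BF.exists_eq_affineForm_mul_add_of_degreeDropSet hdegf ha h
    exact ⟨g, c, hg, BF.degB_le_iff_mem_degreeLE.2 hc, h⟩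
  · exact BF.degreeDropSet_of_eq_affineForm_mul_add hdegf ha
      (BF.degB_le_iff_mem_degreeLE.1 hc) h
  · exact BF.hasDDS_of_simEq_coord_mul hdegf h
end

section
/- Let f be a homogeneous Boolean function of algebraic degree r ≤ n in n variables and let k ≤ n. Then f has a degree-drop affine subspace of co-dimension k if and only if f ∼_{r-1} g for some homogeneous Boolean function g of degree r in which each monomial of g contains at least one of the variables x_1, x_2, ..., x_k. -/
open Finset

/-!
Write `φ(y) = M y + b` for the parametrization of a co-dimension `k` subspace and extend the
injective linear map `M` to an automorphism `L` of `F₂ⁿ` with `L ∘ ι = M`, where `ι` embeds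
`F₂^{n-k}` as the subspace `x₁ = ⋯ = x_k = 0`. An affine substitution never raises the degree, so
`F = f (L · + b)` still has degree `r`, and `f ∘ φ = F ∘ ι`. Restricting to `x₁ = ⋯ = x_k = 0`
kills exactly the monomials containing one of `x₁, …, x_k` and keeps the others, so the
restriction drops the degree iff every degree-`r` monomial of `F` contains one of these variables;
the degree-`r` part `g` of `F` is then the required function, with `g = F + h` and `deg h < r`.
-/

section Anf

variable {n : ℕ}

/-- Möbius inversion on the Boolean lattice; in characteristic two every Möbius coefficient
is `1`. -/
theorem Finset.sum_powerset_sum_powerset {α R : Type*} [DecidableEq α] [Ring R] [CharP R 2]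
    (h : Finset α → R) (S : Finset α) :
    ∑ T ∈ S.powerset, ∑ U ∈ T.powerset, h U = h S := by
  induction S using Finset.induction generalizing h with
  | empty => simp
  | @insert a S ha ih =>
    have hsplit : ∀ T ∈ S.powerset, ∑ U ∈ (insert a T).powerset, h U
        = ∑ U ∈ T.powerset, h U + ∑ U ∈ T.powerset, h (insert a U) := fun T hT =>
      sum_powerset_insert (fun haT => ha (mem_powerset.1 hT haT)) h
    rw [sum_powerset_insert ha, sum_congr rfl hsplit, sum_add_distrib, ih h,
      ih (fun U => h (insert a U)), ← add_assoc, CharTwo.add_self_eq_zero, zero_add]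

def indVec (T : Finset (Fin n)) : Fin n → ZMod 2 := fun i => if i ∈ T then 1 else 0

theorem indVec_support (x : Fin n → ZMod 2) : indVec {i | x i ≠ 0} = x := by
  funext i
  simp only [indVec, mem_filter, mem_univ, true_and]
  generalize x i = a
  fin_cases a <;> rfl

theorem prod_indVec (S T : Finset (Fin n)) :
    ∏ i ∈ S, indVec T i = if S ⊆ T then 1 else 0 := by
  split_ifs with h
  · exact prod_eq_one fun i hi => by simp [indVec, h hi]
  · obtain ⟨i, hiS, hiT⟩ := not_subset.1 h
    exact prod_eq_zero hiS (by simp [indVec, hiT])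

theorem apply_indVec_eq_sum_anf (f : BF n) (T : Finset (Fin n)) :
    f (indVec T) = ∑ S ∈ T.powerset, anf f S :=
  (sum_powerset_sum_powerset (fun U => f (indVec U)) T).symm

theorem eq_sum_anf_mul_prod (f : BF n) (x : Fin n → ZMod 2) :
    f x = ∑ S, anf f S * ∏ i ∈ S, x i := by
  obtain ⟨A, rfl⟩ : ∃ A, indVec A = x := ⟨_, indVec_support x⟩
  simp_rw [apply_indVec_eq_sum_anf f, prod_indVec, mul_ite, mul_one, mul_zero]
  rw [← sum_filter]
  congr 1
  ext S
  simp

theorem anf_add (f g : BF n) (S : Finset (Fin n)) : anf (f + g) S = anf f S + anf g S :=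
  sum_add_distrib

theorem anf_sum {ι : Type*} (s : Finset ι) (f : ι → BF n) (S : Finset (Fin n)) :
    anf (fun x => ∑ i ∈ s, f i x) S = ∑ i ∈ s, anf (f i) S :=
  sum_comm

theorem anf_const_mul (c : ZMod 2) (f : BF n) (S : Finset (Fin n)) :
    anf (fun x => c * f x) S = c * anf f S :=
  (mul_sum _ _ _).symm

theorem anf_monomial (U T : Finset (Fin n)) :
    anf (fun x => ∏ i ∈ U, x i) T = if U = T then 1 else 0 := by
  have hsub : ∀ W : Finset (Fin n), (if U ⊆ W then (1 : ZMod 2) else 0)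
      = ∑ V ∈ W.powerset, if V = U then 1 else 0 := fun W => by
    simp
  simp only [anf, ← indVec.eq_def, prod_indVec, hsub]
  rw [sum_powerset_sum_powerset (fun V => if V = U then (1 : ZMod 2) else 0)]
  exact if_congr eq_comm rfl rfl

theorem anf_sum_monomials {ι : Type*} (J : Finset ι) (a : ι → ZMod 2) (U : ι → Finset (Fin n))
    (T : Finset (Fin n)) :
    anf (fun x => ∑ i ∈ J, a i * ∏ j ∈ U i, x j) T = ∑ i ∈ J with U i = T, a i := by
  simp only [anf_sum, anf_const_mul, anf_monomial, mul_ite, mul_one, mul_zero, sum_filter]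

def ofAnf (c : Finset (Fin n) → ZMod 2) : BF n := fun x => ∑ S ∈ univ, c S * ∏ i ∈ S, x i

theorem anf_ofAnf (c : Finset (Fin n) → ZMod 2) (T : Finset (Fin n)) : anf (ofAnf c) T = c T := by
  unfold ofAnf
  rw [anf_sum_monomials, filter_eq', if_pos (mem_univ T), sum_singleton]

end Anf

section Degree

variable {n : ℕ}

theorem degB_le_iff {f : BF n} {D : WithBot ℕ} :
    degB f ≤ D ↔ ∀ S, anf f S ≠ 0 → (S.card : WithBot ℕ) ≤ D := by
  simp [degB]

theorem card_le_degB {f : BF n} {S : Finset (Fin n)} (h : anf f S ≠ 0) :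
    (S.card : WithBot ℕ) ≤ degB f :=
  degB_le_iff.1 le_rfl S h

theorem exists_anf_ne_zero_card_eq {f : BF n} {r : ℕ} (h : degB f = r) :
    ∃ S, anf f S ≠ 0 ∧ S.card = r := by
  obtain hempty | hne := eq_empty_or_nonempty {S | anf f S ≠ 0}
  · simp [degB, hempty] at h
  · obtain ⟨S, hS, hSup⟩ := exists_mem_eq_sup _ hne fun S => (S.card : WithBot ℕ)
    rw [degB, hSup] at h
    exact ⟨S, (mem_filter.1 hS).2, by exact_mod_cast h⟩

theorem degB_eq_of_homog {g : BF n} {r : ℕ} (hg : Homog g r) {S : Finset (Fin n)}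
    (hS : anf g S ≠ 0) : degB g = r :=
  le_antisymm (degB_le_iff.2 fun T hT => by rw [hg T hT]) (hg S hS ▸ card_le_degB hS)

theorem degB_sum_monomials_le {ι : Type*} (J : Finset ι) (a : ι → ZMod 2)
    (U : ι → Finset (Fin n)) {D : WithBot ℕ} (h : ∀ i ∈ J, a i ≠ 0 → ((U i).card : WithBot ℕ) ≤ D) :
    degB (fun x => ∑ i ∈ J, a i * ∏ j ∈ U i, x j) ≤ D := by
  refine degB_le_iff.2 fun T hT => ?_
  rw [anf_sum_monomials] at hT
  obtain ⟨i, hi, hai⟩ := exists_ne_zero_of_sum_ne_zero hT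
  obtain ⟨hiJ, rfl⟩ := mem_filter.1 hi
  exact h i hiJ hai

theorem degB_monomial_le (U : Finset (Fin n)) : degB (fun x => ∏ i ∈ U, x i) ≤ U.card :=
  degB_le_iff.2 fun T hT => by
    rw [anf_monomial] at hT
    obtain rfl : U = T := by_contra fun h => hT (if_neg h)
    exact le_rfl

theorem prod_mul_prod_eq_prod_union (x : Fin n → ZMod 2) (S T : Finset (Fin n)) :
    (∏ i ∈ S, x i) * ∏ i ∈ T, x i = ∏ i ∈ S ∪ T, x i := by
  obtain ⟨A, rfl⟩ : ∃ A, indVec A = x := ⟨_, indVec_support x⟩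
  simp only [prod_indVec, union_subset_iff]
  by_cases hS : S ⊆ A <;> by_cases hT : T ⊆ A <;> simp [hS, hT]

theorem degB_mul_le {f g : BF n} {a b : ℕ} (hf : degB f ≤ a) (hg : degB g ≤ b) :
    degB (fun x => f x * g x) ≤ ((a + b : ℕ) : WithBot ℕ) := by
  have hexpand : (fun x => f x * g x) = fun x => ∑ p ∈ univ ×ˢ univ,
      anf f p.1 * anf g p.2 * ∏ i ∈ p.1 ∪ p.2, x i := by
    funext x
    rw [eq_sum_anf_mul_prod f x, eq_sum_anf_mul_prod g x, sum_mul_sum, ← sum_product']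
    refine sum_congr rfl fun p _ => ?_
    rw [← prod_mul_prod_eq_prod_union]
    ring
  rw [hexpand]
  refine degB_sum_monomials_le _ _ _ fun p _ hp => ?_
  have hS := (card_le_degB (left_ne_zero_of_mul hp)).trans hf
  have hT := (card_le_degB (right_ne_zero_of_mul hp)).trans hg
  norm_cast at hS hT ⊢
  exact (card_union_le _ _).trans (by omega)

theorem degB_prod_le {ι : Type*} (s : Finset ι) (ℓ : ι → BF n) (h : ∀ i ∈ s, degB (ℓ i) ≤ 1) :
    degB (fun x => ∏ i ∈ s, ℓ i x) ≤ s.card := by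
  classical
  induction s using Finset.induction with
  | empty => simpa using degB_monomial_le (∅ : Finset (Fin n))
  | @insert a s ha ih =>
    simp_rw [prod_insert ha, card_insert_of_notMem ha, add_comm s.card]
    exact degB_mul_le (h a (mem_insert_self a s))
      (ih fun i hi => h i (mem_insert_of_mem hi))

theorem degB_affine_coord_le {m : ℕ} (L : (Fin m → ZMod 2) →ₗ[ZMod 2] (Fin n → ZMod 2))
    (b : Fin n → ZMod 2) (i : Fin n) : degB (fun x => (L x + b) i) ≤ 1 := by
  have hexpand : (fun x => (L x + b) i) = fun x => ∑ o ∈ (univ : Finset (Option (Fin m))),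
      o.elim (b i) (fun j => L (fun t => if j = t then 1 else 0) i) *
        ∏ j ∈ o.elim ∅ singleton, x j := by
    funext x
    simp [Fintype.sum_option, LinearMap.pi_apply_eq_sum_univ L x, add_comm, mul_comm]
  rw [hexpand]
  refine degB_sum_monomials_le _ _ _ fun o _ _ => ?_
  cases o <;> simp

theorem degB_comp_affine_le {m : ℕ} (f : BF n)
    (L : (Fin m → ZMod 2) →ₗ[ZMod 2] (Fin n → ZMod 2)) (b : Fin n → ZMod 2) :
    degB (fun x => f (L x + b)) ≤ degB f := by
  refine degB_le_iff.2 fun T hT => ?_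
  simp_rw [eq_sum_anf_mul_prod f, anf_sum, anf_const_mul] at hT
  obtain ⟨S, -, hS⟩ := exists_ne_zero_of_sum_ne_zero hT
  calc (T.card : WithBot ℕ)
      ≤ degB (fun x => ∏ i ∈ S, (L x + b) i) := card_le_degB (right_ne_zero_of_mul hS)
    _ ≤ S.card := degB_prod_le S _ fun i _ => degB_affine_coord_le L b i
    _ ≤ degB f := card_le_degB (left_ne_zero_of_mul hS)

theorem degB_comp_affineEquiv (f : BF n) (L : (Fin n → ZMod 2) ≃ₗ[ZMod 2] (Fin n → ZMod 2))
    (b : Fin n → ZMod 2) : degB (fun x => f (L x + b)) = degB f := by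
  refine le_antisymm (degB_comp_affine_le f L.toLinearMap b) ?_
  have hinv : f = fun x => f (L (L.symm x + -L.symm b) + b) := by
    funext x
    simp
  conv_lhs => rw [hinv]
  exact degB_comp_affine_le (fun y => f (L y + b)) L.symm.toLinearMap (-L.symm b)

end Degree

theorem LinearMap.exists_linearEquiv_comp_eq {K V W : Type*} [Field K] [AddCommGroup V]
    [Module K V] [AddCommGroup W] [Module K W] [FiniteDimensional K W] {ι M : V →ₗ[K] W}
    (hι : Function.Injective ι) (hM : Function.Injective M) :
    ∃ L : W ≃ₗ[K] W, ∀ v, L (ι v) = M v := by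
  have : FiniteDimensional K V := Module.Finite.of_injective ι hι
  obtain ⟨C, hC⟩ := Submodule.exists_isCompl (LinearMap.range ι)
  obtain ⟨D, hD⟩ := Submodule.exists_isCompl (LinearMap.range M)
  have hCD : Module.finrank K C = Module.finrank K D := by
    have h1 := Submodule.finrank_add_eq_of_isCompl hC
    have h2 := Submodule.finrank_add_eq_of_isCompl hD
    rw [LinearMap.finrank_range_of_inj hι] at h1
    rw [LinearMap.finrank_range_of_inj hM] at h2
    omega
  let eRange := (LinearEquiv.ofInjective ι hι).symm.trans (LinearEquiv.ofInjective M hM)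
  refine ⟨(Submodule.prodEquivOfIsCompl _ _ hC).symm.trans
    ((eRange.prodCongr (LinearEquiv.ofFinrankEq C D hCD)).trans
      (Submodule.prodEquivOfIsCompl _ _ hD)), fun v => ?_⟩
  rw [LinearEquiv.trans_apply, LinearEquiv.trans_apply,
    Submodule.prodEquivOfIsCompl_symm_apply_left _ _ hC ⟨ι v, LinearMap.mem_range_self ι v⟩]
  have hv : (LinearEquiv.ofInjective ι hι).symm ⟨ι v, LinearMap.mem_range_self ι v⟩ = v :=
    (LinearEquiv.ofInjective ι hι).symm_apply_eq.2 rfl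
  simp [eRange, hv]

section Restriction

variable {n : ℕ}

theorem extend_indVec {m : ℕ} {e : Fin m → Fin n} (he : Function.Injective e)
    (U : Finset (Fin m)) : Function.extend e (indVec U) 0 = indVec (U.image e) := by
  funext i
  by_cases hi : ∃ j, e j = i
  · obtain ⟨j, rfl⟩ := hi
    simp [he.extend_apply, indVec, he.eq_iff]
  · rw [Function.extend_apply' _ _ _ hi]
    simp only [indVec, mem_image]
    exact (if_neg fun ⟨j, _, hj⟩ => hi ⟨j, hj⟩).symm

theorem anf_comp_extend {m : ℕ} (F : BF n) {e : Fin m → Fin n} (he : Function.Injective e)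
    (T : Finset (Fin m)) :
    anf (fun y => F (Function.extend e y 0)) T = anf F (T.image e) := by
  classical
  simp only [anf, ← indVec.eq_def, extend_indVec he, powerset_image]
  rw [sum_image fun U _ V _ hUV => image_injective he hUV]

def lastVar (k : ℕ) (j : Fin (n - k)) : Fin n := ⟨k + j, by omega⟩

theorem lastVar_injective (k : ℕ) : Function.Injective (lastVar (n := n) k) :=
  fun i j h => Fin.ext (by simpa [lastVar] using h)

/-- The parametrization of the subspace `x₁ = ⋯ = x_k = 0` by the last `n - k` variables. -/
noncomputable def padZeros (k : ℕ) : (Fin (n - k) → ZMod 2) →ₗ[ZMod 2] (Fin n → ZMod 2) :=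
  Function.ExtendByZero.linearMap (ZMod 2) (lastVar k)

theorem padZeros_injective (k : ℕ) : Function.Injective (padZeros (n := n) k) :=
  Function.extend_injective (lastVar_injective k) 0

theorem padZeros_apply_of_lt {k : ℕ} (y : Fin (n - k) → ZMod 2) {i : Fin n} (hi : (i : ℕ) < k) :
    padZeros k y i = 0 :=
  Function.extend_apply' _ _ _ fun ⟨j, hj⟩ => by
    rw [← hj] at hi
    simp [lastVar] at hi

theorem anf_comp_padZeros (F : BF n) (k : ℕ) (T : Finset (Fin (n - k))) :
    anf (fun y => F (padZeros k y)) T = anf F (T.image (lastVar k)) :=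
  anf_comp_extend F (lastVar_injective k) T

theorem apply_padZeros_eq_zero {g : BF n} {k : ℕ}
    (hg : ∀ S, anf g S ≠ 0 → ∃ i ∈ S, (i : ℕ) < k) (y : Fin (n - k) → ZMod 2) :
    g (padZeros k y) = 0 := by
  rw [eq_sum_anf_mul_prod g]
  refine sum_eq_zero fun S _ => ?_
  by_cases hS : anf g S = 0
  · rw [hS, zero_mul]
  · obtain ⟨i, hiS, hik⟩ := hg S hS
    rw [prod_eq_zero hiS (padZeros_apply_of_lt y hik), mul_zero]

theorem exists_lt_of_degB_comp_padZeros_lt {F : BF n} {k : ℕ} {S : Finset (Fin n)}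
    (hS : anf F S ≠ 0) (hdrop : degB (fun y => F (padZeros k y)) < S.card) :
    ∃ i ∈ S, (i : ℕ) < k := by
  by_contra! hk
  obtain ⟨T, -, rfl⟩ : ∃ T ⊆ univ, T.image (lastVar k) = S := by
    refine subset_image_iff.1 fun i hi => ?_
    have hki := hk i hi
    exact mem_image.2 ⟨⟨i - k, by omega⟩, mem_univ _, Fin.ext (by simp only [lastVar]; omega)⟩
  rw [← anf_comp_padZeros] at hS
  rw [card_image_of_injective _ (lastVar_injective k)] at hdrop
  exact (card_le_degB hS).not_gt hdrop

theorem degB_comp_padZeros_le {F h : BF n} {k : ℕ}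
    (hmono : ∀ S, anf (F + h) S ≠ 0 → ∃ i ∈ S, (i : ℕ) < k) :
    degB (fun y => F (padZeros k y)) ≤ degB h := by
  have hres : (fun y => F (padZeros k y)) = fun y => h (padZeros k y + 0) := by
    funext y
    simpa [CharTwo.add_eq_zero] using apply_padZeros_eq_zero hmono y
  exact hres ▸ degB_comp_affine_le h (padZeros k) 0

end Restriction

section HomogPart

variable {n : ℕ}

def homogPart (F : BF n) (r : ℕ) : BF n := ofAnf fun S => if S.card = r then anf F S else 0

theorem anf_homogPart (F : BF n) (r : ℕ) (S : Finset (Fin n)) :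
    anf (homogPart F r) S = if S.card = r then anf F S else 0 :=
  anf_ofAnf _ S

theorem homog_homogPart (F : BF n) (r : ℕ) : Homog (homogPart F r) r := fun S hS => by
  by_contra h
  exact hS (by rw [anf_homogPart, if_neg h])

theorem degB_homogPart {F : BF n} {r : ℕ} (hF : degB F = r) : degB (homogPart F r) = r := by
  obtain ⟨S, hS, hcard⟩ := exists_anf_ne_zero_card_eq hF
  exact degB_eq_of_homog (homog_homogPart F r) (S := S) (by rwa [anf_homogPart, if_pos hcard])

theorem exists_lt_of_anf_homogPart_ne_zero {F : BF n} {r k : ℕ}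
    (hdrop : degB (fun y => F (padZeros k y)) < r) {S : Finset (Fin n)}
    (hS : anf (homogPart F r) S ≠ 0) : ∃ i ∈ S, (i : ℕ) < k := by
  have hSr := homog_homogPart F r S hS
  rw [anf_homogPart, if_pos hSr] at hS
  exact exists_lt_of_degB_comp_padZeros_lt hS (hSr ▸ hdrop)

theorem degB_add_homogPart_le {F : BF n} {r : ℕ} (hF : degB F ≤ r) :
    degB (F + homogPart F r) ≤ (r - 1 : ℕ) := by
  refine degB_le_iff.2 fun S hS => ?_
  rw [anf_add, anf_homogPart] at hS
  split_ifs at hS with hr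
  · exact absurd (CharTwo.add_self_eq_zero _) hS
  · have := card_le_degB (f := F) (by simpa using hS) |>.trans hF
    norm_cast at this ⊢
    omega

end HomogPart

theorem stmt4_general {n r k : ℕ} (f : BF n) (hdeg : degB f = (r : WithBot ℕ)) :
    HasDDS f k ↔
      ∃ g : BF n, Homog g r ∧ degB g = (r : WithBot ℕ) ∧
        (∀ S : Finset (Fin n), anf g S ≠ 0 → ∃ i ∈ S, (i : ℕ) < k) ∧
        SimEq r f g := by
  constructor
  · rintro ⟨-, -, ⟨M, b, rfl⟩, hinj, -, hdrop⟩
    obtain ⟨L, hL⟩ := LinearMap.exists_linearEquiv_comp_eq (padZeros_injective k)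
      (fun y z h => hinj (by simp [h]) : Function.Injective M)
    set F : BF n := fun x => f (L x + b)
    have hF : degB F = r := (degB_comp_affineEquiv f L b).trans hdeg
    have hdropF : degB (fun y => F (padZeros k y)) < r := by
      rw [← hdeg]
      convert hdrop using 2
      funext y
      simp [F, hL]
    refine ⟨homogPart F r, homog_homogPart F r, degB_homogPart hF,
      fun S => exists_lt_of_anf_homogPart_ne_zero hdropF, L, b, F + homogPart F r,
      degB_add_homogPart_le hF.le, ?_⟩
    funext x
    simp [F, ← add_assoc, CharTwo.add_self_eq_zero]
  · rintro ⟨g, -, hg, hmono, L, b, h, hh, rfl⟩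
    obtain ⟨S₀, hS₀, hcard⟩ := exists_anf_ne_zero_card_eq hg
    obtain ⟨i, hi, -⟩ := hmono S₀ hS₀
    have hr : 0 < r := hcard ▸ card_pos.2 ⟨i, hi⟩
    refine ⟨_, fun y => L (padZeros k y) + b, ⟨L.toLinearMap ∘ₗ padZeros k, b, rfl⟩,
      fun y z hyz => padZeros_injective k (L.injective (add_right_cancel hyz)), rfl, ?_⟩
    calc degB (f ∘ fun y => L (padZeros k y) + b)
        ≤ degB h := degB_comp_padZeros_le (F := fun x => f (L x + b)) hmono
      _ ≤ (r - 1 : ℕ) := hh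
      _ < degB f := by rw [hdeg]; exact_mod_cast Nat.sub_lt hr one_pos

/-- a homogeneous `f` of degree `r ≤ n` has a degree-drop affine subspace of
co-dimension `k ≤ n` iff `f ∼_{r-1} g` for some homogeneous `g` of degree `r` each of whose
monomials contains at least one of the variables `x₁,…,x_k`. -/
theorem stmt4 {n r k : ℕ} (hrn : r ≤ n) (hk : k ≤ n)
    (f : BF n) (hhom : Homog f r) (hdeg : degB f = (r : WithBot ℕ)) :
    HasDDS f k ↔
      ∃ g : BF n, Homog g r ∧ degB g = (r : WithBot ℕ) ∧
        (∀ S : Finset (Fin n), anf g S ≠ 0 → ∃ i ∈ S, (i : ℕ) < k) ∧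
        SimEq r f g :=
  stmt4_general f hdeg
end

section
/- Let f = Σ_{j=1}^p m_j be a homogeneous Boolean function of degree r in n variables, where the m_j are distinct monomials of degree r. Suppose that for every variable index i ∈ Var(f) there exists a monomial m_{j_i} of f such that: (a) i ∉ Var(m_{j_i}), and (b) for every t ∈ Var(m_{j_i}), the monomial x_i·m_{j_i}/x_t does not occur in the ANF of f. Then f has no degree-drop hyperplane. -/
open Finset

lemma zmod2_cases (a : ZMod 2) : a = 0 ∨ a = 1 := by revert a; decide

lemma prodIndic {n : ℕ} (S T : Finset (Fin n)) :
    (∏ m ∈ S, (if m ∈ T then (1 : ZMod 2) else 0)) = if S ⊆ T then 1 else 0 := by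
  by_cases h : S ⊆ T
  · rw [if_pos h]
    exact Finset.prod_eq_one (fun m hm => if_pos (h hm))
  · rw [if_neg h]
    obtain ⟨m, hmS, hmT⟩ := Finset.not_subset.mp h
    exact Finset.prod_eq_zero hmS (if_neg hmT)

lemma count_between {n : ℕ} (T U : Finset (Fin n)) :
    (((U.powerset.filter (fun S => T ⊆ S)).card : ZMod 2)) = if T = U then 1 else 0 := by
  by_cases h : T ⊆ U
  · rw [← Finset.Icc_eq_filter_powerset, Finset.card_Icc_finset h]
    by_cases he : T = U
    · simp [he]
    · rw [if_neg he]
      have hlt : T.card < U.card := Finset.card_lt_card (lt_of_le_of_ne h he)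
      obtain ⟨k, hk⟩ := Nat.exists_eq_succ_of_ne_zero (show U.card - T.card ≠ 0 by omega)
      have h2 : ((2:ℕ) : ZMod 2) = 0 := by decide
      rw [hk]
      push_cast
      have h2' : (2 : ZMod 2) = 0 := by decide
      rw [pow_succ, h2', mul_zero]
  · have he : T ≠ U := fun h' => h (h' ▸ Finset.Subset.refl _)
    rw [if_neg he]
    have : U.powerset.filter (fun S => T ⊆ S) = ∅ := by
      apply Finset.filter_eq_empty_iff.mpr
      intro S hS hTS
      exact h (hTS.trans (Finset.mem_powerset.mp hS))
    simp [this]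

/-- Möbius inversion: a Boolean function equals its ANF expansion. -/
lemma anf_expand {m : ℕ} (g : BF m) (x : Fin m → ZMod 2) :
    g x = ∑ S : Finset (Fin m), anf g S * ∏ i ∈ S, x i := by
  classical
  set U : Finset (Fin m) := Finset.univ.filter (fun i => x i = 1) with hU
  have hx : x = fun i => if i ∈ U then 1 else 0 := by
    funext i
    rcases zmod2_cases (x i) with h | h <;> simp [hU, h]
  rw [hx]
  have step2 : ∑ S : Finset (Fin m), anf g S * ∏ i ∈ S, (if i ∈ U then (1:ZMod 2) else 0)
      = ∑ S ∈ U.powerset, anf g S := by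
    rw [Finset.sum_congr rfl (fun S (_ : S ∈ (Finset.univ : Finset (Finset (Fin m)))) => by
      rw [prodIndic S U, mul_ite, mul_one, mul_zero])]
    rw [← Finset.sum_filter]
    congr 1
    ext S
    simp
  rw [step2]
  unfold anf
  rw [Finset.sum_comm' (t' := U.powerset)
    (s' := fun T => U.powerset.filter (fun S => T ⊆ S)) (by
      intro S T
      simp only [Finset.mem_powerset, Finset.mem_filter]
      constructor
      · rintro ⟨hSU, hTS⟩
        exact ⟨⟨hSU, hTS⟩, hTS.trans hSU⟩
      · rintro ⟨⟨hSU, hTS⟩, _⟩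
        exact ⟨hSU, hTS⟩)]
  rw [Finset.sum_congr rfl (fun T _ => by
    rw [Finset.sum_const, nsmul_eq_mul, count_between T U])]
  simp

/-- If all monomials of `g` have degree `< d`, then the sum of `g` over any affine image
of the `d`-cube is zero. -/
lemma cube_sum_zero {m d : ℕ} (g : BF m) (hg : ∀ S, anf g S ≠ 0 → S.card < d)
    (L : (Fin d → ZMod 2) →ₗ[ZMod 2] (Fin m → ZMod 2)) (a : Fin m → ZMod 2) :
    ∑ y : Fin d → ZMod 2, g (L y + a) = 0 := by
  haveI : Fact (Nat.Prime 2) := ⟨by norm_num⟩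
  have expand : ∀ y, g (L y + a) = ∑ S : Finset (Fin m), anf g S * ∏ i ∈ S, (L y + a) i :=
    fun y => anf_expand g (L y + a)
  rw [Finset.sum_congr rfl (fun y _ => expand y), Finset.sum_comm]
  apply Finset.sum_eq_zero
  intro S _
  by_cases hS : anf g S = 0
  · simp [hS]
  · have hcard : S.card < d := hg S hS
    suffices h : ∑ y : Fin d → ZMod 2, ∏ i ∈ S, (L y + a) i = 0 by
      rw [← Finset.mul_sum] at *
      rw [h, mul_zero]
    -- find a nonzero direction annihilated on all coordinates of S
    set K : (Fin d → ZMod 2) →ₗ[ZMod 2] ({x // x ∈ S} → ZMod 2) :=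
      LinearMap.pi (fun i => (LinearMap.proj (i : Fin m)).comp L) with hK
    have hKnotinj : ¬ Function.Injective K := by
      intro hinj
      have h1 : Module.finrank (ZMod 2) (Fin d → ZMod 2)
          ≤ Module.finrank (ZMod 2) ({x // x ∈ S} → ZMod 2) :=
        LinearMap.finrank_le_finrank_of_injective hinj
      rw [Module.finrank_pi, Module.finrank_pi, Fintype.card_fin, Fintype.card_coe] at h1
      omega
    rw [Function.not_injective_iff] at hKnotinj
    obtain ⟨y₁, y₂, hKeq, hne⟩ := hKnotinj
    set y₀ := y₁ - y₂ with hy₀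
    have hy₀ne : y₀ ≠ 0 := sub_ne_zero.mpr hne
    have hKy₀ : ∀ i (hi : i ∈ S), (L y₀) i = 0 := by
      intro i hi
      have : K y₀ = 0 := by rw [hy₀, map_sub, hKeq, sub_self]
      have := congrFun this ⟨i, hi⟩
      simpa [hK, LinearMap.pi_apply] using this
    apply Finset.sum_ninvolution (fun y => y + y₀)
    · intro y
      have : ∀ i ∈ S, (L (y + y₀) + a) i = (L y + a) i := by
        intro i hi
        simp only [map_add, Pi.add_apply]
        rw [hKy₀ i hi]
        ring
      rw [Finset.prod_congr rfl this]
      exact CharTwo.add_self_eq_zero _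
    · intro y _
      simpa using hy₀ne
    · intro y; exact Finset.mem_univ _
    · intro y
      have h0 : y₀ + y₀ = 0 := by funext i; exact CharTwo.add_self_eq_zero (y₀ i)
      rw [add_assoc, h0, add_zero]

/-- The ANF of a sum of distinct monomials. -/
lemma anf_sum_monomials_s5 {n : ℕ} (M : Finset (Finset (Fin n))) (S : Finset (Fin n)) :
    anf (fun x => ∑ T ∈ M, ∏ i ∈ T, x i) S = if S ∈ M then 1 else 0 := by
  unfold anf
  rw [Finset.sum_comm]
  have h2 : ∀ S' ∈ M, (∑ T ∈ S.powerset, ∏ i ∈ S', (if i ∈ T then (1:ZMod 2) else 0))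
      = if S' = S then 1 else 0 := by
    intro S' _
    rw [Finset.sum_congr rfl (fun T _ => prodIndic S' T), ← Finset.sum_filter,
      Finset.sum_const, nsmul_eq_mul, mul_one]
    exact count_between S' S
  rw [Finset.sum_congr rfl h2, Finset.sum_ite_eq' M S (fun _ => (1:ZMod 2))]

/-- STATEMENT 6: if for every variable index `i` occurring in `f` there is a monomial `m` of
`f` with `i ∉ Var(m)` such that, for all `t ∈ Var(m)`, the monomial `x_i·m/x_t` does not occur
in the ANF of `f`, then `f` has no degree-drop hyperplane. -/
theorem stmt6 {n r : ℕ}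
    (M : Finset (Finset (Fin n))) (hM : M.Nonempty)
    (hMr : ∀ S ∈ M, S.card = r)
    (f : BF n) (hf : f = fun x => ∑ S ∈ M, ∏ i ∈ S, x i)
    (hcond : ∀ i : Fin n, (∃ S ∈ M, i ∈ S) →
      ∃ S₀ ∈ M, i ∉ S₀ ∧ ∀ t ∈ S₀, insert i (S₀.erase t) ∉ M) :
    ¬ HasDDS f 1 := by
  classical
  haveI : Fact (Nat.Prime 2) := ⟨by norm_num⟩
  rintro ⟨A, φ, ⟨Φ, b, hφf⟩, hinj, hrange, hlt⟩
  -- the ANF of f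
  have hanf : ∀ S, anf f S = if S ∈ M then 1 else 0 := by
    intro S; rw [hf]; exact anf_sum_monomials_s5 M S
  -- degB f = r
  have hdegf : degB f = (r : WithBot ℕ) := by
    unfold degB
    have hfil : Finset.univ.filter (fun S => anf f S ≠ 0) = M := by
      ext S
      by_cases h : S ∈ M <;> simp [hanf, h]
    rw [hfil, Finset.sup_congr rfl (fun S hS => by rw [hMr S hS]),
      Finset.sup_const hM]
  -- the degrees of all monomials of f ∘ φ are < r
  have hdegdrop : ∀ S, anf (f ∘ φ) S ≠ 0 → S.card < r := by
    intro S hS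
    have h1 : (S.card : WithBot ℕ) ≤ degB (f ∘ φ) := by
      unfold degB
      exact Finset.le_sup (f := fun T : Finset (Fin (n-1)) => ((T.card : ℕ) : WithBot ℕ))
        (Finset.mem_filter.mpr ⟨Finset.mem_univ S, hS⟩)
    have h2 : (S.card : WithBot ℕ) < (r : WithBot ℕ) := lt_of_le_of_lt h1 (hdegf ▸ hlt)
    exact_mod_cast h2
  -- handle n = 0
  rcases Nat.eq_zero_or_pos n with hn | hn
  · subst hn
    have hφid : f ∘ φ = f := by
      funext x
      have : φ x = x := by funext j; exact j.elim0
      rw [Function.comp_apply, this]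
    rw [hφid] at hlt
    exact lt_irrefl _ hlt
  -- Φ is injective, its range H is a proper subspace
  have hΦinj : Function.Injective Φ := by
    intro x y hxy
    apply hinj
    rw [hφf]
    simp [hxy]
  set H := LinearMap.range Φ with hH
  have hHrank : Module.finrank (ZMod 2) H = n - 1 := by
    rw [LinearMap.finrank_range_of_inj hΦinj, Module.finrank_pi, Fintype.card_fin]
  have hVrank : Module.finrank (ZMod 2) (Fin n → ZMod 2) = n := by
    rw [Module.finrank_pi, Fintype.card_fin]
  have hHne : H ≠ ⊤ := by
    intro h
    rw [h, finrank_top, hVrank] at hHrank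
    omega
  -- the basis vectors
  set eB : Fin n → (Fin n → ZMod 2) := fun i j => if i = j then 1 else 0 with heB
  obtain ⟨i, hiH⟩ : ∃ i, eB i ∉ H := by
    by_contra h
    push_neg at h
    apply hHne
    rw [eq_top_iff]
    intro x _
    rw [pi_eq_sum_univ x]
    exact Submodule.sum_mem _ (fun j _ => Submodule.smul_mem _ _ (h j))
  -- every vector is in H or becomes so after adding e_i
  have claim : ∀ v : Fin n → ZMod 2, v ∈ H ∨ v + eB i ∈ H := by
    intro v
    by_cases hv : v ∈ H
    · exact Or.inl hv
    right
    have hlt' : H < H ⊔ Submodule.span (ZMod 2) {eB i} := by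
      refine lt_of_le_of_ne le_sup_left (fun h => hiH ?_)
      rw [h]
      exact Submodule.mem_sup_right (Submodule.mem_span_singleton_self (eB i))
    have htop : H ⊔ Submodule.span (ZMod 2) {eB i} = ⊤ := by
      apply Submodule.eq_top_of_finrank_eq
      have h1 := Submodule.finrank_lt_finrank_of_lt hlt'
      have h2 := Submodule.finrank_le (H ⊔ Submodule.span (ZMod 2) {eB i})
      rw [hVrank] at h2 ⊢
      omega
    have hv' : v ∈ H ⊔ Submodule.span (ZMod 2) {eB i} := htop ▸ Submodule.mem_top
    obtain ⟨h₁, hh₁, s, hs, hvs⟩ := Submodule.mem_sup.mp hv'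
    obtain ⟨c, rfl⟩ := Submodule.mem_span_singleton.mp hs
    rcases zmod2_cases c with hc | hc
    · exfalso; apply hv; rw [← hvs, hc, zero_smul, add_zero]; exact hh₁
    · rw [← hvs, hc, one_smul, add_assoc]
      have : eB i + eB i = 0 := by funext j; exact CharTwo.add_self_eq_zero _
      rw [this, add_zero]
      exact hh₁
  -- left inverse of Φ
  obtain ⟨Ψ, hΨ⟩ := Φ.exists_leftInverse_of_injective (LinearMap.ker_eq_bot.mpr hΦinj)
  have hΨΦ : ∀ v ∈ H, Φ (Ψ v) = v := by
    rintro v ⟨u, rfl⟩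
    rw [show Ψ (Φ u) = u from LinearMap.ext_iff.mp hΨ u]
  -- choose the special monomial S₀
  obtain ⟨S₀, hS₀M, hiS₀, hkey⟩ :
      ∃ S₀ ∈ M, i ∉ S₀ ∧ ∀ S ∈ M, i ∈ S → ¬ S.erase i ⊆ S₀ := by
    by_cases hi : ∃ S ∈ M, i ∈ S
    · obtain ⟨S₀, h1, h2, h3⟩ := hcond i hi
      refine ⟨S₀, h1, h2, ?_⟩
      intro S hSM hiS hsub
      have hrS : S.card = r := hMr S hSM
      have hrS₀ : S₀.card = r := hMr S₀ h1
      have hr1 : 0 < r := hrS ▸ Finset.card_pos.mpr ⟨i, hiS⟩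
      have hcer : (S.erase i).card = r - 1 := by
        rw [Finset.card_erase_of_mem hiS, hrS]
      have hsd : (S₀ \ S.erase i).card = 1 := by
        rw [Finset.card_sdiff_of_subset hsub, hrS₀, hcer]; omega
      obtain ⟨t, ht⟩ := Finset.card_eq_one.mp hsd
      have htmem : t ∈ S₀ \ S.erase i := ht ▸ Finset.mem_singleton_self t
      have htS₀ : t ∈ S₀ := (Finset.mem_sdiff.mp htmem).1
      have htne : t ∉ S.erase i := (Finset.mem_sdiff.mp htmem).2
      have hsub' : S.erase i ⊆ S₀.erase t := by
        intro m hm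
        exact Finset.mem_erase.mpr ⟨fun h => htne (h ▸ hm), hsub hm⟩
      have hereq : S.erase i = S₀.erase t := by
        apply Finset.eq_of_subset_of_card_le hsub'
        rw [Finset.card_erase_of_mem htS₀, hrS₀, hcer]
      have : insert i (S₀.erase t) = S := by
        rw [← hereq, Finset.insert_erase hiS]
      exact h3 t htS₀ (this ▸ hSM)
    · obtain ⟨S₀, hS₀⟩ := hM
      exact ⟨S₀, hS₀, fun h => hi ⟨S₀, hS₀, h⟩, fun S hSM hiS _ => hi ⟨S, hSM, hiS⟩⟩
  have hScard : S₀.card = r := hMr S₀ hS₀M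
  set σ : Fin r ≃ {x // x ∈ S₀} := (Finset.equivFinOfCardEq hScard).symm with hσ
  -- the correction coefficients
  have hεex : ∀ j : Fin n, ∃ e : ZMod 2, eB j + e • eB i ∈ H := by
    intro j
    rcases claim (eB j) with h | h
    · exact ⟨0, by simpa using h⟩
    · exact ⟨1, by simpa using h⟩
  choose ε hε using hεex
  obtain ⟨c, hc⟩ : ∃ c : ZMod 2, c • eB i + b ∈ H := by
    rcases claim b with h | h
    · exact ⟨0, by simpa using h⟩
    · exact ⟨1, by simpa [add_comm] using h⟩
  set u : Fin n → (Fin n → ZMod 2) := fun j => eB j + ε j • eB i with hu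
  set a : Fin n → ZMod 2 := c • eB i with ha
  -- the linear parametrization of the cube
  set L : (Fin r → ZMod 2) →ₗ[ZMod 2] (Fin n → ZMod 2) :=
    { toFun := fun y => ∑ k : Fin r, y k • u (σ k),
      map_add' := by intro y z; simp [add_smul, Finset.sum_add_distrib],
      map_smul' := by intro d y; simp [mul_smul, Finset.smul_sum] } with hL
  -- coordinates of the cube points
  have hcoord : ∀ (y : Fin r → ZMod 2) (m : Fin n),
      (L y + a) m = (∑ k : Fin r, y k * ((if (σ k : Fin n) = m then 1 else 0)
        + ε (σ k) * (if i = m then 1 else 0))) + c * (if i = m then 1 else 0) := by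
    intro y m
    show (∑ k : Fin r, y k • u (σ k)) m + a m = _
    rw [Finset.sum_apply]
    have hterm : ∀ k : Fin r, (y k • u (σ k)) m
        = y k * ((if (σ k : Fin n) = m then 1 else 0) + ε (σ k) * (if i = m then 1 else 0)) := by
      intro k; simp [hu, heB]
    rw [Finset.sum_congr rfl (fun k _ => hterm k)]
    congr 1
  have E1 : ∀ (y : Fin r → ZMod 2) (m : Fin n), m ∉ S₀ → m ≠ i → (L y + a) m = 0 := by
    intro y m hm hmi
    rw [hcoord]
    have him : (if i = m then (1:ZMod 2) else 0) = 0 := if_neg (fun h => hmi h.symm)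
    rw [him]
    rw [Finset.sum_congr rfl (fun k _ => by
      rw [if_neg (fun h : (σ k : Fin n) = m => hm (h ▸ (σ k).2)), mul_zero, add_zero, mul_zero])]
    simp
  have E2 : ∀ (y : Fin r → ZMod 2) (m : Fin n) (hm : m ∈ S₀),
      (L y + a) m = y (σ.symm ⟨m, hm⟩) := by
    intro y m hm
    have hmi : m ≠ i := fun h => hiS₀ (h ▸ hm)
    rw [hcoord]
    have him : (if i = m then (1:ZMod 2) else 0) = 0 := if_neg (fun h => hmi h.symm)
    rw [him, mul_zero, add_zero]
    rw [Finset.sum_congr rfl (fun k _ => by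
      rw [mul_zero, add_zero, mul_ite, mul_one, mul_zero])]
    rw [Finset.sum_eq_single_of_mem (σ.symm ⟨m, hm⟩) (Finset.mem_univ _)
      (fun k _ hk => if_neg (fun h => hk (by
        have h2 : σ k = ⟨m, hm⟩ := Subtype.ext h
        rw [← h2, Equiv.symm_apply_apply])))]
    rw [if_pos (by simp)]
  -- the cube lies in the hyperplane
  have hmemH : ∀ y : Fin r → ZMod 2, (L y + a) + b ∈ H := by
    intro y
    rw [add_assoc]
    apply Submodule.add_mem _ ?_ hc
    show (∑ k : Fin r, y k • u (σ k)) ∈ H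
    exact Submodule.sum_mem _ (fun k _ => Submodule.smul_mem _ _ (hε (σ k)))
  have hφΨ : ∀ y : Fin r → ZMod 2, φ (Ψ ((L y + a) + b)) = L y + a := by
    intro y
    rw [hφf]
    show Φ (Ψ ((L y + a) + b)) + b = L y + a
    rw [hΨΦ _ (hmemH y), add_assoc]
    have hbb : b + b = 0 := by funext j; exact CharTwo.add_self_eq_zero _
    rw [hbb, add_zero]
  -- the cube sum vanishes since f ∘ φ has low degree
  have hzero := cube_sum_zero (f ∘ φ) hdegdrop (Ψ.comp L) (Ψ (a + b))
  have hval : ∀ y : Fin r → ZMod 2, (f ∘ φ) ((Ψ.comp L) y + Ψ (a + b)) = f (L y + a) := by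
    intro y
    have h1 : (Ψ.comp L) y + Ψ (a + b) = Ψ ((L y + a) + b) := by
      rw [LinearMap.comp_apply, ← map_add, add_assoc]
    rw [h1]
    show f (φ (Ψ ((L y + a) + b))) = f (L y + a)
    rw [hφΨ y]
  rw [Finset.sum_congr rfl (fun y _ => hval y)] at hzero
  -- but the cube sum equals 1
  have hone : ∑ y : Fin r → ZMod 2, f (L y + a) = 1 := by
    rw [hf]
    simp only []
    rw [Finset.sum_comm]
    rw [Finset.sum_eq_single S₀ ?_ (fun h => absurd hS₀M h)]
    · -- the main term
      have hprod : ∀ y : Fin r → ZMod 2, ∏ m ∈ S₀, (L y + a) m = ∏ k : Fin r, y k := by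
        intro y
        calc ∏ m ∈ S₀, (L y + a) m
            = ∏ m : {x // x ∈ S₀}, (L y + a) m.1 := (Finset.prod_coe_sort S₀ _).symm
          _ = ∏ m : {x // x ∈ S₀}, y (σ.symm m) :=
              Fintype.prod_congr _ _ (fun m => by rw [E2 y m.1 m.2, Subtype.coe_eta])
          _ = ∏ k : Fin r, y k := by
              rw [← Equiv.prod_comp σ (fun m : {x // x ∈ S₀} => y (σ.symm m))]
              exact Fintype.prod_congr _ _ (fun k => by rw [Equiv.symm_apply_apply])
      rw [Finset.sum_congr rfl (fun y _ => hprod y)]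
      rw [Fintype.sum_eq_single (fun _ => (1 : ZMod 2)) ?_]
      · exact Finset.prod_const_one
      · intro y hy
        obtain ⟨k, hk⟩ := Function.ne_iff.mp hy
        have hk0 : y k = 0 := by
          rcases zmod2_cases (y k) with h | h
          · exact h
          · exact absurd h hk
        exact Finset.prod_eq_zero (Finset.mem_univ k) hk0
    · -- all other monomials contribute 0
      intro S hSM hne
      by_cases hiS : i ∈ S
      · obtain ⟨m₀, hm₀e, hm₀S₀⟩ := Finset.not_subset.mp (hkey S hSM hiS)
        have hm₀i : m₀ ≠ i := (Finset.mem_erase.mp hm₀e).1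
        have hm₀S : m₀ ∈ S := (Finset.mem_erase.mp hm₀e).2
        exact Finset.sum_eq_zero (fun y _ => Finset.prod_eq_zero hm₀S (E1 y m₀ hm₀S₀ hm₀i))
      · have hns : ¬ S ⊆ S₀ := fun hsub => hne
          (Finset.eq_of_subset_of_card_le hsub (le_of_eq (by rw [hScard, hMr S hSM])))
        obtain ⟨m₀, hm₀S, hm₀S₀⟩ := Finset.not_subset.mp hns
        exact Finset.sum_eq_zero (fun y _ => Finset.prod_eq_zero hm₀S
          (E1 y m₀ hm₀S₀ (fun h => hiS (h ▸ hm₀S))))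
  rw [hone] at hzero
  exact one_ne_zero hzero
end
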